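/- With the quantum double relations and the coset-averaged operators as defined, for all h₁, h₂, g₁, g₂ ∈ G one has (A^{h₁N}·B^{g₁N})·(A^{h₂N}·B^{g₂N}) = A^{(h₁h₂)N}·B^{g₂N} if g₂N = (h₂⁻¹·g₁·h₂)N, and (A^{h₁N}·B^{g₁N})·(A^{h₂N}·B^{g₂N}) = 0 otherwise. (Thus the products A^{hN}·B^{gN} realize the multiplication rule of the quantum double algebra 𝒟(M/N).) -/
import Mathlib


open scoped Classical

/-- The coset-averaged operator `A^{hN} := |N|⁻¹ ∑_{n ∈ N} A(h·n)`. -/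
noncomputable def Acoset {G R : Type*} [Group G] [Fintype G] [Ring R] [Algebra ℂ R]
    (A : G → R) (N : Subgroup G) (h : G) : R :=
  algebraMap ℂ R ((Fintype.card N : ℂ)⁻¹) * ∑ n : N, A (h * n)

/-- The coset-summed operator `B^{gN} := ∑_{n ∈ N} B(g·n)`. -/
noncomputable def Bcoset {G R : Type*} [Group G] [Fintype G] [Ring R]
    (B : G → R) (N : Subgroup G) (g : G) : R :=
  ∑ n : N, B (g * n)

section Aux

variable {G R : Type*} [Group G] [Fintype G] [Ring R]

/-- `Bcoset` only depends on the coset. -/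
lemma Bcoset_congr (B : G → R) (N : Subgroup G) {g g' : G} (hmem : g⁻¹ * g' ∈ N) :
    Bcoset B N g = Bcoset B N g' := by
  unfold Bcoset
  have hmem' : g'⁻¹ * g ∈ N := by
    have := N.inv_mem hmem
    simpa [mul_inv_rev] using this
  refine Fintype.sum_equiv (Equiv.mulLeft (⟨g'⁻¹ * g, hmem'⟩ : N))
    (fun m => B (g * m)) (fun m => B (g' * m)) (fun m => ?_)
  push_cast [Equiv.coe_mulLeft]
  group

lemma Bcoset_mul_A (B A : G → R) (N : Subgroup G) [N.Normal]
    (hBA : ∀ g h : G, B g * A h = A h * B (h⁻¹ * g * h)) (g h : G) :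
    Bcoset B N g * A h = A h * Bcoset B N (h⁻¹ * g * h) := by
  unfold Bcoset
  rw [Finset.sum_mul, Finset.mul_sum]
  refine Fintype.sum_equiv ((MulAut.conjNormal h⁻¹ : MulAut N)).toEquiv _ _ (fun m => ?_)
  rw [hBA]
  congr 1
  have h1 : (((MulAut.conjNormal h⁻¹ : MulAut N)).toEquiv m : G) = h⁻¹ * m * h := by
    simp [MulAut.conjNormal_apply]
  rw [h1]
  group

lemma Bcoset_mul_self (B : G → R) (N : Subgroup G)
    (hB : ∀ g g' : G, B g * B g' = if g = g' then B g else 0) (g : G) :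
    Bcoset B N g * Bcoset B N g = Bcoset B N g := by
  unfold Bcoset
  rw [Finset.sum_mul]
  refine Finset.sum_congr rfl (fun n _ => ?_)
  rw [Finset.mul_sum, Finset.sum_eq_single n]
  · rw [hB, if_pos rfl]
  · intro m _ hmn
    rw [hB, if_neg]
    intro hc
    exact hmn (Subtype.ext (mul_left_cancel hc).symm)
  · intro hn; exact absurd (Finset.mem_univ n) hn

lemma Bcoset_mul_of_ne (B : G → R) (N : Subgroup G)
    (hB : ∀ g g' : G, B g * B g' = if g = g' then B g else 0) {g g' : G}
    (hne : g⁻¹ * g' ∉ N) :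
    Bcoset B N g * Bcoset B N g' = 0 := by
  unfold Bcoset
  rw [Finset.sum_mul]
  refine Finset.sum_eq_zero (fun n _ => ?_)
  rw [Finset.mul_sum]
  refine Finset.sum_eq_zero (fun m _ => ?_)
  rw [hB, if_neg]
  intro hc
  apply hne
  have h3 : g⁻¹ * g' = ↑n * (↑m : G)⁻¹ := by
    rw [eq_mul_inv_iff_mul_eq, mul_assoc, ← hc]
    group
  rw [h3]
  exact N.mul_mem n.2 (N.inv_mem m.2)

end Aux

section Aux2

variable {G R : Type*} [Group G] [Fintype G] [Ring R] [Algebra ℂ R]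

lemma Acoset_def (A : G → R) (N : Subgroup G) (h : G) :
    Acoset A N h = algebraMap ℂ R ((Fintype.card N : ℂ)⁻¹) * ∑ n : N, A (h * n) := rfl

lemma A_mul_Acoset (A : G → R) (N : Subgroup G) [N.Normal]
    (hA : ∀ h h' : G, A h * A h' = A (h * h')) (h₁ h₂ : G) {n : G} (hn : n ∈ N) :
    A (h₁ * n) * Acoset A N h₂ = Acoset A N (h₁ * h₂) := by
  rw [Acoset_def, Acoset_def, ← mul_assoc, ← Algebra.commutes, mul_assoc,
    Finset.mul_sum]
  congr 1
  have hmem : h₂⁻¹ * n * h₂ ∈ N := by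
    simpa using Subgroup.Normal.conj_mem ‹N.Normal› n hn h₂⁻¹
  refine Fintype.sum_equiv (Equiv.mulLeft (⟨h₂⁻¹ * n * h₂, hmem⟩ : N))
    (fun m => A (h₁ * n) * A (h₂ * m)) (fun m => A (h₁ * h₂ * m)) (fun m => ?_)
  rw [hA]
  congr 1
  push_cast [Equiv.coe_mulLeft]
  group

lemma Acoset_mul_Acoset (A : G → R) (N : Subgroup G) [N.Normal]
    (hA : ∀ h h' : G, A h * A h' = A (h * h')) (h₁ h₂ : G) :
    Acoset A N h₁ * Acoset A N h₂ = Acoset A N (h₁ * h₂) := by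
  have step : Acoset A N h₁ * Acoset A N h₂
      = algebraMap ℂ R ((Fintype.card N : ℂ)⁻¹) * ∑ n : N, (A (h₁ * n) * Acoset A N h₂) := by
    rw [Acoset_def A N h₁, mul_assoc, Finset.sum_mul]
  rw [step, Finset.sum_congr rfl (fun (n : N) _ => A_mul_Acoset A N hA h₁ h₂ n.2),
    Finset.sum_const, Finset.card_univ, nsmul_eq_mul, ← mul_assoc]
  have hcard : (Fintype.card N : ℂ) ≠ 0 := Nat.cast_ne_zero.mpr Fintype.card_ne_zero
  rw [← map_natCast (algebraMap ℂ R) (Fintype.card N), ← map_mul,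
    inv_mul_cancel₀ hcard, map_one, one_mul]

lemma Bcoset_mul_Acoset (B A : G → R) (N : Subgroup G) [N.Normal]
    (hBA : ∀ g h : G, B g * A h = A h * B (h⁻¹ * g * h)) (g h : G) :
    Bcoset B N g * Acoset A N h = Acoset A N h * Bcoset B N (h⁻¹ * g * h) := by
  have hpt : ∀ n : N, Bcoset B N g * A (h * ↑n) = A (h * ↑n) * Bcoset B N (h⁻¹ * g * h) := by
    intro n
    rw [Bcoset_mul_A B A N hBA]
    congr 1
    refine (Bcoset_congr B N ?_).symm
    have hrw : (h⁻¹ * g * h)⁻¹ * ((h * ↑n)⁻¹ * g * (h * ↑n)) =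
        ((h⁻¹ * g * h)⁻¹ * (↑n : G)⁻¹ * (h⁻¹ * g * h)) * ↑n := by group
    rw [hrw]
    refine N.mul_mem ?_ n.2
    simpa using Subgroup.Normal.conj_mem ‹N.Normal› _ (N.inv_mem n.2) (h⁻¹ * g * h)⁻¹
  rw [Acoset_def]
  calc Bcoset B N g * (algebraMap ℂ R ((Fintype.card N : ℂ)⁻¹) * ∑ n : N, A (h * n))
      = algebraMap ℂ R ((Fintype.card N : ℂ)⁻¹) * (Bcoset B N g * ∑ n : N, A (h * n)) := by
        rw [← mul_assoc, ← Algebra.commutes, mul_assoc]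
    _ = algebraMap ℂ R ((Fintype.card N : ℂ)⁻¹) *
        ∑ n : N, (A (h * n) * Bcoset B N (h⁻¹ * g * h)) := by
        rw [Finset.mul_sum]
        exact congrArg _ (Finset.sum_congr rfl (fun n _ => hpt n))
    _ = algebraMap ℂ R ((Fintype.card N : ℂ)⁻¹) *
        ((∑ n : N, A (h * n)) * Bcoset B N (h⁻¹ * g * h)) := by rw [Finset.sum_mul]
    _ = _ := by rw [← mul_assoc]

end Aux2

/-- The products `A^{hN}·B^{gN}` realize the multiplication rule of the quantum double
algebra `𝒟(M/N)`:
`(A^{h₁N}·B^{g₁N})·(A^{h₂N}·B^{g₂N}) = δ_{g₂N, (h₂⁻¹g₁h₂)N} · A^{(h₁h₂)N}·B^{g₂N}`. -/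
theorem Acoset_Bcoset_mul {G R : Type*} [Group G] [Fintype G] [Ring R] [Algebra ℂ R]
    (N : Subgroup G) [N.Normal] (A B : G → R)
    (hA : ∀ h h' : G, A h * A h' = A (h * h'))
    (hB : ∀ g g' : G, B g * B g' = if g = g' then B g else 0)
    (hBA : ∀ g h : G, B g * A h = A h * B (h⁻¹ * g * h)) :
    ∀ h₁ h₂ g₁ g₂ : G,
      (Acoset A N h₁ * Bcoset B N g₁) * (Acoset A N h₂ * Bcoset B N g₂) =
        if (g₂ : G ⧸ N) = ((h₂⁻¹ * g₁ * h₂ : G) : G ⧸ N)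
          then Acoset A N (h₁ * h₂) * Bcoset B N g₂ else 0 := by
  intro h₁ h₂ g₁ g₂
  have key : (Acoset A N h₁ * Bcoset B N g₁) * (Acoset A N h₂ * Bcoset B N g₂) =
      Acoset A N (h₁ * h₂) * (Bcoset B N (h₂⁻¹ * g₁ * h₂) * Bcoset B N g₂) := by
    calc (Acoset A N h₁ * Bcoset B N g₁) * (Acoset A N h₂ * Bcoset B N g₂)
        = Acoset A N h₁ * (Bcoset B N g₁ * Acoset A N h₂) * Bcoset B N g₂ := by
          simp only [mul_assoc]
      _ = Acoset A N h₁ * (Acoset A N h₂ * Bcoset B N (h₂⁻¹ * g₁ * h₂)) * Bcoset B N g₂ := by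
          rw [Bcoset_mul_Acoset B A N hBA]
      _ = (Acoset A N h₁ * Acoset A N h₂) * (Bcoset B N (h₂⁻¹ * g₁ * h₂) * Bcoset B N g₂) := by
          simp only [mul_assoc]
      _ = _ := by rw [Acoset_mul_Acoset A N hA]
  rw [key]
  by_cases hc : (g₂ : G ⧸ N) = ((h₂⁻¹ * g₁ * h₂ : G) : G ⧸ N)
  · rw [if_pos hc]
    have hmem : (h₂⁻¹ * g₁ * h₂)⁻¹ * g₂ ∈ N := by
      rw [← QuotientGroup.eq]
      exact hc.symm
    rw [Bcoset_congr B N hmem, Bcoset_mul_self B N hB]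
  · rw [if_neg hc]
    have hmem : (h₂⁻¹ * g₁ * h₂)⁻¹ * g₂ ∉ N := by
      rw [← QuotientGroup.eq]
      exact fun h => hc h.symm
    rw [Bcoset_mul_of_ne B N hB hmem, mul_zero]
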